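/- Anytime lower-deviation bound with an extra margin (Lemma 3(b)): Let W_1, …, W_T be i.i.d. 1-sub-Gaussian random variables with E[W_1] = 0, let T_1 ≤ T_2 ≤ T be positive reals, and let l > 0. If δ ∈ (0, √3], then P( ∃ integer s ∈ [T_1, T_2] such that (1/s)·Σ_{i=1}^s W_i + √(2l/s) + δ ≤ 0 ) ≤ 4 / ( δ² · exp( (√l + δ·√(T_1/2))² ) ). -/

import Mathlib

open MeasureTheory ProbabilityTheory Real

lemma aux_exp_neg_le {x : ℝ} (hx0 : 0 < x) (hx : x ≤ 3/2) : Real.exp (-x) ≤ 1 - x/2 := by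
  rcases le_or_gt x 1 with h1 | h1
  · have h := Real.add_one_le_exp x
    have hpos : (0:ℝ) < 1 + x := by linarith
    have h2 : Real.exp (-x) ≤ (1+x)⁻¹ := by
      rw [Real.exp_neg]
      exact inv_anti₀ hpos (by linarith)
    have h3 : (1+x)⁻¹ ≤ 1 - x/2 := by
      rw [inv_le_iff_one_le_mul₀ hpos]
      nlinarith
    linarith
  · have h := Real.add_one_le_exp (x - 1)
    have he : (2.718:ℝ) ≤ Real.exp 1 := by
      have := Real.exp_one_gt_d9
      linarith
    have hex : Real.exp (x-1) * Real.exp 1 = Real.exp x := by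
      rw [← Real.exp_add]; ring_nf
    have hxpos : (0:ℝ) < x := hx0
    have hexpos := Real.exp_pos x
    have hexpos1 := Real.exp_pos (x-1)
    have hge : x * 2.718 ≤ Real.exp x := by
      calc x * 2.718 ≤ Real.exp (x-1) * Real.exp 1 := by
            have : x ≤ Real.exp (x-1) := by linarith
            have h01 : (0:ℝ) < 2.718 := by norm_num
            exact mul_le_mul this he (by norm_num) (le_of_lt hexpos1)
        _ = Real.exp x := hex
    rw [Real.exp_neg, inv_le_iff_one_le_mul₀ hexpos]
    have hxe : 0 < x * 2.718 := by nlinarith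
    nlinarith [mul_le_mul_of_nonneg_left hge (by nlinarith : (0:ℝ) ≤ 1 - x/2)]

lemma aux_sq_expand {l δ x : ℝ} (hl : 0 ≤ l) (hx : 0 ≤ x) :
    (Real.sqrt l + δ * Real.sqrt (x/2))^2
      = l + δ * Real.sqrt (2*l*x) + δ^2 * (x/2) := by
  have hv : Real.sqrt l ^ 2 = l := Real.sq_sqrt hl
  have hw : Real.sqrt (x/2) ^ 2 = x/2 := Real.sq_sqrt (by linarith)
  have hu : Real.sqrt (2*l*x) = 2 * Real.sqrt l * Real.sqrt (x/2) := by
    rw [show 2*l*x = (2 * Real.sqrt l * Real.sqrt (x/2))^2 by nlinarith, Real.sqrt_sq (by positivity)]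
  rw [hu]
  linear_combination hv + δ^2 * hw

lemma aux_chernoff
    {Ω : Type*} [MeasurableSpace Ω] (P : Measure Ω) [IsProbabilityMeasure P]
    (T : ℕ) (W : ℕ → Ω → ℝ) (hWmeas : ∀ i, Measurable (W i))
    (hWsub : ∀ i ∈ Finset.Icc 1 T, ∀ t : ℝ, Integrable (fun ω => Real.exp (t * W i ω)) P ∧
      ∫ ω, Real.exp (t * W i ω) ∂P ≤ Real.exp (t ^ 2 * 1 ^ 2 / 2))
    (hWindep : iIndepFun (fun i : Fin T => W (i + 1)) P)
    (l δ : ℝ) (hl : 0 < l) (hδ : 0 < δ)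
    (s : ℕ) (hs1 : 1 ≤ s) (hsT : s ≤ T) :
    P {ω | (∑ i ∈ Finset.Icc 1 s, W i ω) ≤ -(Real.sqrt (2*l*s) + s*δ)}
      ≤ ENNReal.ofReal (Real.exp (-((Real.sqrt l + δ * Real.sqrt ((s:ℝ)/2))^2))) := by
  have hspos : (0:ℝ) < s := by exact_mod_cast hs1
  set u : ℝ := Real.sqrt (2*l*(s:ℝ)) with hu
  have hu0 : 0 ≤ u := Real.sqrt_nonneg _
  have hu2 : u^2 = 2*l*s := Real.sq_sqrt (by positivity)
  set a : ℝ := u + s*δ with ha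
  have hapos : 0 < a := by nlinarith
  set t : ℝ := -(a / s) with htdef
  have ht : t ≤ 0 := by
    have : 0 < a / s := div_pos hapos hspos
    simp only [htdef]; linarith
  -- the finset of Fin T indices
  set F : Finset (Fin T) := Finset.univ.filter (fun j => (j:ℕ) + 1 ≤ s) with hF
  have hmemIcc : ∀ j : Fin T, ((j:ℕ)+1) ∈ Finset.Icc 1 T := by
    intro j
    simp only [Finset.mem_Icc]
    exact ⟨le_add_self, j.isLt⟩
  have hsum : ∀ ω, (∑ i ∈ Finset.Icc 1 s, W i ω) = ∑ j ∈ F, W ((j:ℕ)+1) ω := by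
    intro ω
    refine Finset.sum_bij' (fun i hi => (⟨i - 1, by
        simp only [Finset.mem_Icc] at hi; omega⟩ : Fin T))
      (fun j hj => (j:ℕ) + 1) ?_ ?_ ?_ ?_ ?_
    · intro i hi
      simp only [Finset.mem_Icc] at hi
      simp only [hF, Finset.mem_filter, Finset.mem_univ, true_and]
      omega
    · intro j hj
      simp only [hF, Finset.mem_filter, Finset.mem_univ, true_and] at hj
      simp only [Finset.mem_Icc]
      omega
    · intro i hi
      simp only [Finset.mem_Icc] at hi
      simp only [Fin.val_mk]
      omega
    · intro j hj
      apply Fin.ext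
      simp only [Fin.val_mk]
      omega
    · intro i hi
      simp only [Finset.mem_Icc] at hi
      simp only [Fin.val_mk]
      congr 1
      omega
  have hcard : F.card = s := by
    rw [show s = (Finset.Icc 1 s).card by rw [Nat.card_Icc]; omega]
    refine (Finset.card_bij' (fun j hj => (j:ℕ) + 1) (fun i hi => (⟨i - 1, by
        simp only [Finset.mem_Icc] at hi; omega⟩ : Fin T)) ?_ ?_ ?_ ?_)
    · intro j hj
      simp only [hF, Finset.mem_filter, Finset.mem_univ, true_and] at hj
      simp only [Finset.mem_Icc]
      omega
    · intro i hi
      simp only [Finset.mem_Icc] at hi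
      simp only [hF, Finset.mem_filter, Finset.mem_univ, true_and]
      omega
    · intro j hj
      apply Fin.ext
      simp only [Fin.val_mk]
      omega
    · intro i hi
      simp only [Finset.mem_Icc] at hi
      simp only [Fin.val_mk]
      omega
  have hint : ∀ (r : ℝ) (j : Fin T),
      Integrable (fun ω => Real.exp (r * W ((j:ℕ)+1) ω)) P :=
    fun r j => (hWsub _ (hmemIcc j) r).1
  set X : Ω → ℝ := ∑ j ∈ F, (fun i : Fin T => W ((i:ℕ) + 1)) j with hX
  have hXsum : ∀ ω, X ω = ∑ i ∈ Finset.Icc 1 s, W i ω := by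
    intro ω
    rw [hsum ω]
    simp [hX]
  have hintX : Integrable (fun ω => Real.exp (t * X ω)) P :=
    hWindep.integrable_exp_mul_sum (fun j => hWmeas _) (fun j _ => hint t j)
  have hcher := measure_le_le_exp_mul_mgf (μ := P) (X := X) (-a) ht hintX
  have hmgf : mgf X P t ≤ Real.exp (s * (t^2/2)) := by
    rw [hX, hWindep.mgf_sum (fun j => hWmeas _) F]
    calc ∏ j ∈ F, mgf (W ((j:ℕ)+1)) P t
        ≤ ∏ j ∈ F, Real.exp (t^2/2) := by
          refine Finset.prod_le_prod (fun j _ => mgf_nonneg) (fun j _ => ?_)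
          have := (hWsub _ (hmemIcc j) t).2
          simpa [mgf] using this
      _ = Real.exp (t^2/2) ^ s := by rw [Finset.prod_const, hcard]
      _ = Real.exp (s * (t^2/2)) := (Real.exp_nat_mul _ s).symm
  have hbound : (P {ω | X ω ≤ -a}).toReal ≤ Real.exp (-(a^2/(2*s))) := by
    refine hcher.trans ?_
    calc Real.exp (-t * -a) * mgf X P t
        ≤ Real.exp (-t * -a) * Real.exp (s * (t^2/2)) := by
          exact mul_le_mul_of_nonneg_left hmgf (le_of_lt (Real.exp_pos _))
      _ = Real.exp (-t * -a + s * (t^2/2)) := (Real.exp_add _ _).symm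
      _ = Real.exp (-(a^2/(2*s))) := by
          congr 1
          simp only [htdef]
          field_simp
          ring
  have hexp_eq : a^2/(2*s) = (Real.sqrt l + δ * Real.sqrt ((s:ℝ)/2))^2 := by
    rw [aux_sq_expand hl.le (le_of_lt hspos)]
    rw [← hu]
    field_simp
    ring_nf
    nlinarith [hu2]
  have hset : {ω | (∑ i ∈ Finset.Icc 1 s, W i ω) ≤ -(Real.sqrt (2*l*s) + s*δ)}
      = {ω | X ω ≤ -a} := by
    ext ω
    simp only [Set.mem_setOf_eq, hXsum ω, ha, hu]
  rw [hset, ← ENNReal.ofReal_toReal (measure_ne_top P _)]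
  exact ENNReal.ofReal_le_ofReal (by rw [← hexp_eq]; exact hbound)

/-- A real random variable `X` is `σ`-sub-Gaussian under `P`:
`E[exp (λ X)] ≤ exp (λ² σ² / 2)` for all `λ ∈ ℝ` (with the implicit integrability). -/
def IsSubGaussian {Ω : Type*} [MeasurableSpace Ω] (P : Measure Ω) (σ : ℝ) (X : Ω → ℝ) : Prop :=
  ∀ t : ℝ, Integrable (fun ω => Real.exp (t * X ω)) P ∧
    ∫ ω, Real.exp (t * X ω) ∂P ≤ Real.exp (t ^ 2 * σ ^ 2 / 2)

/-- **Anytime lower-deviation bound with an extra margin (Lemma 3(b)).** -/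
theorem anytime_lower_deviation_margin
    {Ω : Type*} [MeasurableSpace Ω] (P : Measure Ω) [IsProbabilityMeasure P]
    (T : ℕ) (hT : 0 < T)
    (W : ℕ → Ω → ℝ) (hWmeas : ∀ i, Measurable (W i))
    (hWsub : ∀ i ∈ Finset.Icc 1 T, IsSubGaussian P 1 (W i))
    (hWmean : ∀ i ∈ Finset.Icc 1 T, ∫ ω, W i ω ∂P = 0)
    (hWiid : ∀ i ∈ Finset.Icc 1 T, Measure.map (W i) P = Measure.map (W 1) P)
    (hWindep : iIndepFun (fun i : Fin T => W (i + 1)) P)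
    (T₁ T₂ : ℝ) (hT₁ : 0 < T₁) (h12 : T₁ ≤ T₂) (h2T : T₂ ≤ T)
    (l : ℝ) (hl : 0 < l)
    (δ : ℝ) (hδ : 0 < δ) (hδ3 : δ ≤ Real.sqrt 3) :
    P {ω | ∃ s : ℕ, T₁ ≤ (s : ℝ) ∧ (s : ℝ) ≤ T₂ ∧
        (∑ i ∈ Finset.Icc 1 s, W i ω) / s + Real.sqrt (2 * l / s) + δ ≤ 0}
      ≤ ENNReal.ofReal
          (4 / (δ ^ 2 * Real.exp ((Real.sqrt l + δ * Real.sqrt (T₁ / 2)) ^ 2))) := by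
  classical
  set s₀ : ℕ := ⌈T₁⌉₊ with hs₀
  set s₁ : ℕ := ⌊T₂⌋₊ with hs₁
  set A : ℕ → Set Ω :=
    fun s => {ω | (∑ i ∈ Finset.Icc 1 s, W i ω) ≤ -(Real.sqrt (2*l*s) + s*δ)} with hA
  have hT₁s₀ : T₁ ≤ (s₀:ℝ) := Nat.le_ceil T₁
  have hs₁T : s₁ ≤ T := by
    have h := Nat.floor_le_floor (R := ℝ) h2T
    simpa [hs₁] using h
  -- inclusion into a finite union
  have hsub : {ω | ∃ s : ℕ, T₁ ≤ (s : ℝ) ∧ (s : ℝ) ≤ T₂ ∧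
      (∑ i ∈ Finset.Icc 1 s, W i ω) / s + Real.sqrt (2 * l / s) + δ ≤ 0}
      ⊆ ⋃ s ∈ Finset.Icc s₀ s₁, A s := by
    rintro ω ⟨s, hsa, hsb, hsc⟩
    have hsp : (0:ℝ) < s := lt_of_lt_of_le hT₁ hsa
    refine Set.mem_biUnion (Finset.mem_Icc.mpr ⟨Nat.ceil_le.mpr hsa, Nat.le_floor hsb⟩) ?_
    show (∑ i ∈ Finset.Icc 1 s, W i ω) ≤ -(Real.sqrt (2*l*s) + s*δ)
    have key : Real.sqrt (2*l*(s:ℝ)) = (s:ℝ) * Real.sqrt (2*l/s) := by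
      rw [show (2:ℝ)*l*(s:ℝ) = ((s:ℝ))^2 * (2*l/s) by field_simp,
        Real.sqrt_mul (by positivity), Real.sqrt_sq hsp.le]
    have h5 : (s:ℝ) * ((∑ i ∈ Finset.Icc 1 s, W i ω)/s + Real.sqrt (2*l/s) + δ) ≤ 0 := by
      have := mul_le_mul_of_nonneg_left hsc hsp.le
      simpa using this
    have h6 : (s:ℝ) * ((∑ i ∈ Finset.Icc 1 s, W i ω)/s) = ∑ i ∈ Finset.Icc 1 s, W i ω := by
      field_simp
    rw [mul_add, mul_add, h6] at h5
    rw [key]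
    linarith
  refine le_trans (measure_mono hsub) ?_
  refine le_trans (measure_biUnion_finset_le _ _) ?_
  have hterm : ∀ s ∈ Finset.Icc s₀ s₁, P (A s)
      ≤ ENNReal.ofReal (Real.exp (-((Real.sqrt l + δ * Real.sqrt ((s:ℝ)/2))^2))) := by
    intro s hs
    obtain ⟨hls, hus⟩ := Finset.mem_Icc.mp hs
    have hs1 : 1 ≤ s := by
      have : 0 < s₀ := Nat.ceil_pos.mpr hT₁
      omega
    exact aux_chernoff P T W hWmeas (fun i hi => hWsub i hi) hWindep l δ hl hδ s hs1
      (le_trans hus hs₁T)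
  refine le_trans (Finset.sum_le_sum hterm) ?_
  rw [← ENNReal.ofReal_sum_of_nonneg (fun i _ => (Real.exp_pos _).le)]
  refine ENNReal.ofReal_le_ofReal ?_
  set c : ℝ := Real.exp (-((Real.sqrt l + δ * Real.sqrt (T₁/2))^2)) with hc
  set r : ℝ := Real.exp (-(δ^2/2)) with hr
  have hr0 : 0 < r := Real.exp_pos _
  have hr1 : r < 1 := by
    rw [hr, ← Real.exp_zero]
    exact Real.exp_lt_exp.mpr (by nlinarith)
  have hterm2 : ∀ s ∈ Finset.Icc s₀ s₁,
      Real.exp (-((Real.sqrt l + δ * Real.sqrt ((s:ℝ)/2))^2)) ≤ c * r^(s - s₀) := by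
    intro s hs
    obtain ⟨hls, hus⟩ := Finset.mem_Icc.mp hs
    have hsR : T₁ ≤ (s:ℝ) := le_trans hT₁s₀ (by exact_mod_cast hls)
    have hcast : ((s - s₀ : ℕ):ℝ) = (s:ℝ) - (s₀:ℝ) := by
      push_cast [Nat.cast_sub hls]; ring
    have hineq : (Real.sqrt l + δ * Real.sqrt (T₁/2))^2 + δ^2 * ((s-s₀:ℕ):ℝ)/2
        ≤ (Real.sqrt l + δ * Real.sqrt ((s:ℝ)/2))^2 := by
      rw [aux_sq_expand hl.le hT₁.le, aux_sq_expand hl.le (by positivity : (0:ℝ) ≤ (s:ℝ)),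
        hcast]
      have hmono : Real.sqrt (2*l*T₁) ≤ Real.sqrt (2*l*(s:ℝ)) :=
        Real.sqrt_le_sqrt (by nlinarith)
      nlinarith [hδ.le, sq_nonneg δ, hT₁s₀]
    calc Real.exp (-((Real.sqrt l + δ * Real.sqrt ((s:ℝ)/2))^2))
        ≤ Real.exp (-((Real.sqrt l + δ * Real.sqrt (T₁/2))^2) + ((s-s₀:ℕ):ℝ) * (-(δ^2/2))) := by
          refine Real.exp_le_exp.mpr ?_
          nlinarith [hineq]
      _ = c * r^(s - s₀) := by
          rw [Real.exp_add, hc, hr, Real.exp_nat_mul]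
  refine le_trans (Finset.sum_le_sum hterm2) ?_
  rw [← Finset.mul_sum]
  have hgeom : ∑ s ∈ Finset.Icc s₀ s₁, r^(s-s₀) ≤ 1/(1-r) := by
    have h1 : ∑ s ∈ Finset.Icc s₀ s₁, r^(s-s₀) = ∑ k ∈ Finset.range (s₁+1-s₀), r^k := by
      rw [← Finset.Ico_add_one_right_eq_Icc, Finset.sum_Ico_eq_sum_range]
      exact Finset.sum_congr rfl (fun k hk => by congr 1; omega)
    rw [h1, geom_sum_eq (ne_of_lt hr1),
      show r^(s₁+1-s₀) - 1 = -(1 - r^(s₁+1-s₀)) by ring,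
      show r - 1 = -(1-r) by ring, neg_div_neg_eq,
      div_le_div_iff₀ (by linarith) (by linarith)]
    nlinarith [pow_pos hr0 (s₁+1-s₀)]
  have hδ2 : δ^2 ≤ 3 := by
    nlinarith [Real.sq_sqrt (by norm_num : (0:ℝ) ≤ 3), Real.sqrt_nonneg 3]
  have hkey : δ^2/4 ≤ 1 - r := by
    have := aux_exp_neg_le (x := δ^2/2) (by positivity) (by linarith)
    rw [hr]; linarith
  have hc0 : 0 < c := Real.exp_pos _
  calc c * ∑ s ∈ Finset.Icc s₀ s₁, r^(s-s₀)
      ≤ c * (1/(1-r)) := mul_le_mul_of_nonneg_left hgeom hc0.le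
    _ ≤ c * (4/δ^2) := by
        refine mul_le_mul_of_nonneg_left ?_ hc0.le
        have hδp : (0:ℝ) < δ^2 := by positivity
        have h1r : (0:ℝ) < 1 - r := by linarith
        rw [div_le_div_iff₀ h1r hδp]
        linarith
    _ = 4 / (δ ^ 2 * Real.exp ((Real.sqrt l + δ * Real.sqrt (T₁ / 2)) ^ 2)) := by
        have habs : ∀ E : ℝ, 0 < E → E⁻¹ * (4/δ^2) = 4/(δ^2*E) := by
          intro E hE
          field_simp
        rw [hc, Real.exp_neg]
        exact habs _ (Real.exp_pos _)
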